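/- arXiv:1105.2897 — 4 statements merged into one kernel-verified Lean document; each statement's English description precedes it below -/
import Mathlib

section
/- Let R be a Noetherian Japanese integral domain with quotient field K, let A be a finite-dimensional semisimple K-algebra with center Z, and let Λ be a maximal R-order in A. Then Λ contains the integral closure of R in Z, i.e. every element of Z that is integral over R lies in Λ. -/
/-- An `R`-order in a `K`-algebra `A`: a subring (`R`-subalgebra) of `A` which is
finitely generated as an `R`-module and spans `A` over `K`. -/
def IsOrder (R K A : Type*) [CommRing R] [Field K] [Ring A]
    [Algebra R K] [Algebra K A] [Algebra R A] [IsScalarTower R K A]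
    (Λ : Subalgebra R A) : Prop :=
  (Subalgebra.toSubmodule Λ).FG ∧ Submodule.span K (Λ : Set A) = ⊤

/-- A maximal `R`-order: an `R`-order not properly contained in any other `R`-order. -/
def IsMaximalOrder (R K A : Type*) [CommRing R] [Field K] [Ring A]
    [Algebra R K] [Algebra K A] [Algebra R A] [IsScalarTower R K A]
    (Λ : Subalgebra R A) : Prop :=
  IsOrder R K A Λ ∧ ∀ Λ' : Subalgebra R A, IsOrder R K A Λ' → Λ ≤ Λ' → Λ' = Λ

/-- `R` (with quotient field `K`) is Japanese: for every finite field extension `L/K`,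
the integral closure of `R` in `L` is a finitely generated `R`-module. -/
def IsJapaneseRing (R K : Type*) [CommRing R] [Field K] [Algebra R K] : Prop :=
  ∀ (L : Type*) [Field L] [Algebra K L], FiniteDimensional K L →
    ∀ (_ : Algebra R L) (_ : IsScalarTower R K L),
      (Subalgebra.toSubmodule (integralClosure R L)).FG


/-- A maximal `R`-order `Λ` in a finite-dimensional semisimple
`K`-algebra `A` (with `R` Noetherian Japanese) contains every element of the center
of `A` that is integral over `R`. -/
theorem maximalOrder_contains_integralClosure_center
    (R K A : Type*) [CommRing R] [IsDomain R] [IsNoetherianRing R]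
    [Field K] [Algebra R K] [IsFractionRing R K]
    (hJap : IsJapaneseRing R K)
    [Ring A] [Algebra K A] [Algebra R A] [IsScalarTower R K A]
    [FiniteDimensional K A] [IsSemisimpleRing A]
    (Λ : Subalgebra R A) (hΛ : IsMaximalOrder R K A Λ)
    (z : A) (hz : z ∈ Subalgebra.center K A) (hint : IsIntegral R z) :
    z ∈ Λ := by
  obtain ⟨⟨hfgΛ, hspanΛ⟩, hmax⟩ := hΛ
  classical
  set C : Subalgebra R A := Algebra.adjoin R {z} with hC
  have hCcentral : ∀ c ∈ C, ∀ a : A, a * c = c * a := by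
    intro c hc
    have : C ≤ Subalgebra.center R A := by
      apply Algebra.adjoin_le
      intro x hx
      rcases hx with rfl
      exact Subalgebra.mem_center_iff.mpr (Subalgebra.mem_center_iff.mp hz)
    exact Subalgebra.mem_center_iff.mp (this hc)
  set L : Submodule R A := Subalgebra.toSubmodule Λ with hL
  set Cm : Submodule R A := Subalgebra.toSubmodule C with hCm
  set N : Submodule R A := L * Cm with hN
  -- commutation of submodules
  have hcomm : Cm * L = L * Cm := by
    apply le_antisymm
    · rw [Submodule.mul_le]
      intro c hc l hl
      rw [← hCcentral c hc l]
      exact Submodule.mul_mem_mul hl hc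
    · rw [Submodule.mul_le]
      intro l hl c hc
      rw [hCcentral c hc l]
      exact Submodule.mul_mem_mul hc hl
  have hLL : L * L ≤ L := by
    rw [Submodule.mul_le]; intro a ha b hb
    exact (Subalgebra.mem_toSubmodule _).mpr (mul_mem ((Subalgebra.mem_toSubmodule _).mp ha) ((Subalgebra.mem_toSubmodule _).mp hb))
  have hCC : Cm * Cm ≤ Cm := by
    rw [Submodule.mul_le]; intro a ha b hb
    exact (Subalgebra.mem_toSubmodule _).mpr (mul_mem ((Subalgebra.mem_toSubmodule _).mp ha) ((Subalgebra.mem_toSubmodule _).mp hb))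
  have hNmul : ∀ x ∈ N, ∀ y ∈ N, x * y ∈ N := by
    have : N * N ≤ N := by
      calc L * Cm * (L * Cm) = L * (Cm * L) * Cm := by rw [mul_assoc, mul_assoc, mul_assoc]
        _ = L * (L * Cm) * Cm := by rw [hcomm]
        _ = (L * L) * (Cm * Cm) := by rw [mul_assoc, mul_assoc, mul_assoc]
        _ ≤ L * Cm := mul_le_mul' hLL hCC
    intro x hx y hy
    exact this (Submodule.mul_mem_mul hx hy)
  have hone : (1 : A) ∈ N := by
    simpa using Submodule.mul_mem_mul ((Subalgebra.mem_toSubmodule _).mpr (one_mem Λ)) ((Subalgebra.mem_toSubmodule _).mpr (one_mem C))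
  have hLN : L ≤ N := by
    intro x hx
    simpa using Submodule.mul_mem_mul hx ((Subalgebra.mem_toSubmodule _).mpr (one_mem C))
  have hzN : z ∈ N := by
    have : (1 : A) * z ∈ N :=
      Submodule.mul_mem_mul ((Subalgebra.mem_toSubmodule _).mpr (one_mem Λ)) ((Subalgebra.mem_toSubmodule _).mpr (Algebra.subset_adjoin rfl))
    simpa using this
  -- build the order Λ'
  set Λ' : Subalgebra R A :=
    { carrier := N
      add_mem' := fun ha hb => N.add_mem ha hb
      mul_mem' := fun {a b} ha hb => hNmul a ha b hb
      one_mem' := hone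
      zero_mem' := N.zero_mem
      algebraMap_mem' := fun r => by
        rw [Algebra.algebraMap_eq_smul_one]
        exact N.smul_mem r hone } with hΛ'
  have hle : Λ ≤ Λ' := hLN
  have hfg : (Subalgebra.toSubmodule Λ').FG := by
    have : Subalgebra.toSubmodule Λ' = N := rfl
    rw [this]
    exact hfgΛ.mul hint.fg_adjoin_singleton
  have hspan : Submodule.span K (Λ' : Set A) = ⊤ := by
    apply top_unique
    rw [← hspanΛ]
    exact Submodule.span_mono hle
  have := hmax Λ' ⟨hfg, hspan⟩ hle
  rw [← this]
  exact hzN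
end

section
/- Let A be a Noetherian integral domain which is N-1, i.e. the integral closure of A in its quotient field is a finitely generated A-module. Then the normal locus Nor(Spec A) = { 𝔭 ∈ Spec A : the localization A_𝔭 is integrally closed in its fraction field } is an open subset of Spec A. -/
/-- Let `A` be a Noetherian integral domain which is N-1, i.e. the
integral closure of `A` in its quotient field is a finitely generated `A`-module.
Then the normal locus `{𝔭 ∈ Spec A | A_𝔭 is integrally closed}` is open in `Spec A`. -/
theorem normalLocus_isOpen_of_N1
    (A : Type*) [CommRing A] [IsDomain A] [IsNoetherianRing A]
    (hN1 : (Subalgebra.toSubmodule (integralClosure A (FractionRing A))).FG) :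
    IsOpen {p : PrimeSpectrum A | IsIntegrallyClosed (Localization.AtPrime p.asIdeal)} := by
  classical
  set K := FractionRing A
  set P : Submodule A K := Subalgebra.toSubmodule (integralClosure A K) with hP
  set N : Submodule A K := LinearMap.range (Algebra.linearMap A K) with hN
  set c : Ideal A := N.colon P with hc
  have hset : {p : PrimeSpectrum A | IsIntegrallyClosed (Localization.AtPrime p.asIdeal)}
      = (PrimeSpectrum.zeroLocus (c : Set A))ᶜ := by
    ext p
    simp only [Set.mem_setOf_eq, Set.mem_compl_iff, PrimeSpectrum.mem_zeroLocus,
      SetLike.coe_subset_coe, SetLike.not_le_iff_exists]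
    constructor
    · intro hic
      obtain ⟨t, ht⟩ := hN1
      -- every element of t lands in A_p up to a denominator
      have key : ∀ x ∈ t, ∃ s : A, s ∉ p.asIdeal ∧ s • x ∈ N := by
        intro x hx
        have hxP : x ∈ P := ht ▸ Submodule.subset_span hx
        have hxA : IsIntegral A x := hxP
        have hxint : IsIntegral (Localization.AtPrime p.asIdeal) x :=
          hxA.tower_top
        obtain ⟨y, hy⟩ := (isIntegrallyClosed_iff K).mp hic hxint
        obtain ⟨⟨b, s⟩, hbs⟩ := IsLocalization.surj p.asIdeal.primeCompl y
        refine ⟨s, s.2, ⟨b, ?_⟩⟩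
        have := congrArg (algebraMap (Localization.AtPrime p.asIdeal) K) hbs
        rw [map_mul, hy] at this
        rw [Algebra.linearMap_apply, Algebra.smul_def]
        rw [← IsScalarTower.algebraMap_apply, ← IsScalarTower.algebraMap_apply] at this
        rw [mul_comm] at this
        exact this.symm
      have hind : ∀ u : Finset K, (∀ x ∈ u, ∃ s : A, s ∉ p.asIdeal ∧ s • x ∈ N) →
          ∃ s : A, s ∉ p.asIdeal ∧ ∀ x ∈ u, s • x ∈ N := by
        intro u
        induction u using Finset.induction_on with
        | empty => exact fun _ => ⟨1, fun h => p.isPrime.ne_top (Ideal.eq_top_of_isUnit_mem _ h isUnit_one), by simp⟩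
        | @insert a u ha ih =>
          intro h
          obtain ⟨s, hs, hsu⟩ := ih fun x hx => h x (Finset.mem_insert_of_mem hx)
          obtain ⟨sa, hsa, hsaa⟩ := h a (Finset.mem_insert_self a u)
          refine ⟨s * sa, fun hm => ?_, fun x hx => ?_⟩
          · rcases p.isPrime.mem_or_mem hm with h' | h' <;> [exact hs h'; exact hsa h']
          rcases Finset.mem_insert.mp hx with rfl | hx
          · rw [mul_smul]; exact N.smul_mem s hsaa
          · rw [mul_comm, mul_smul]; exact N.smul_mem sa (hsu x hx)
      obtain ⟨s, hs, hsu⟩ := hind t key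
      refine ⟨s, ?_, hs⟩
      rw [hc, Submodule.mem_colon]
      intro z hz
      have : P ≤ N.comap (LinearMap.lsmul A K s) := by
        rw [← ht, Submodule.span_le]
        intro x hx
        exact hsu x hx
      exact this hz
    · rintro ⟨s, hsc, hsp⟩
      rw [isIntegrallyClosed_iff K]
      intro x hx
      obtain ⟨m, hm⟩ := hx.exists_multiple_integral_of_isLocalization p.asIdeal.primeCompl x
      have hmx : (m : A) • x ∈ P := hm
      have h1 : s • ((m : A) • x) ∈ N := Submodule.mem_colon.mp hsc _ hmx
      obtain ⟨b, hb⟩ := h1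
      have hsm : s * (m : A) ∈ p.asIdeal.primeCompl := p.asIdeal.primeCompl.mul_mem hsp m.2
      refine ⟨IsLocalization.mk' _ b ⟨s * (m : A), hsm⟩, ?_⟩
      have hne : algebraMap A K (s * (m : A)) ≠ 0 := by
        simp only [ne_eq, map_eq_zero_iff _ (IsFractionRing.injective A K)]
        intro h0
        exact hsm (h0 ▸ p.asIdeal.zero_mem)
      have heq : algebraMap (Localization.AtPrime p.asIdeal) K
          (IsLocalization.mk' _ b (⟨s * (m : A), hsm⟩ : p.asIdeal.primeCompl))
          * algebraMap A K (s * (m : A)) = algebraMap A K b := by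
        rw [IsScalarTower.algebraMap_apply A (Localization.AtPrime p.asIdeal) K (s * (m : A)),
          ← map_mul, IsLocalization.mk'_spec,
          ← IsScalarTower.algebraMap_apply]
      have hxx : x * algebraMap A K (s * (m : A)) = algebraMap A K b := by
        rw [Algebra.linearMap_apply] at hb
        rw [hb, smul_smul, Algebra.smul_def, mul_comm]
      have := heq.trans hxx.symm
      exact mul_right_cancel₀ hne this
  rw [hset]
  exact (PrimeSpectrum.isClosed_zeroLocus _).isOpen_compl
end

section
/- Let f : A → B be a flat local homomorphism of (commutative) local rings. If B is an integral domain that is integrally closed in its fraction field, then A is an integral domain that is integrally closed in its fraction field. -/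
/-!
A flat local homomorphism of local rings is faithfully flat, and a faithfully flat map
`A → B` satisfies `I B ∩ A = I` for every ideal `I` of `A`. For principal ideals this says
that divisibility in `A` can be tested in `B` (with `b = 0`: the map is injective). Now if
`x = a / b` in the fraction field of `A` is integral over `A`, its image is integral over
`B`, hence lies in `B`; so `b ∣ a` in `B`, hence in `A`, and `x ∈ A`.
-/

open IsLocalization

theorem IsIntegrallyClosed.of_dvd_of_map_dvd {A B : Type*} [CommRing A] [CommRing B]
    [IsDomain B] [IsIntegrallyClosed B] {f : A →+* B}
    (hdvd : ∀ a b : A, f b ∣ f a → b ∣ a) :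
    IsIntegrallyClosed A := by
  have hf : Function.Injective f := (injective_iff_map_eq_zero f).2 fun a ha =>
    zero_dvd_iff.1 <| hdvd a 0 (by rw [ha]; exact dvd_zero _)
  have := hf.isDomain f
  have hle : nonZeroDivisors A ≤ (nonZeroDivisors B).comap f := fun b hb =>
    mem_nonZeroDivisors_of_ne_zero <| (map_ne_zero_iff f hf).2 (nonZeroDivisors.ne_zero hb)
  let φ : FractionRing A →+* FractionRing B := map _ f hle
  rw [isIntegrallyClosed_iff (FractionRing A)]
  intro x hx
  obtain ⟨⟨a, b⟩, rfl⟩ := mk'_surjective (nonZeroDivisors A) x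
  have hφx : IsIntegral B (φ (mk' _ a b)) := hx.map_of_comp_eq f φ (map_comp hle).symm
  obtain ⟨y, hy⟩ := IsIntegrallyClosed.isIntegral_iff.1 hφx
  rw [map_mk', eq_mk'_iff_mul_eq, ← map_mul] at hy
  have hfab : f a = f b * y := by rw [← IsFractionRing.injective B (FractionRing B) hy, mul_comm]
  obtain ⟨c, rfl⟩ := hdvd a b ⟨y, hfab⟩
  exact ⟨c, by rw [eq_mk'_iff_mul_eq, ← map_mul, mul_comm]⟩

section FaithfullyFlat

variable {A B : Type*} [CommRing A] [CommRing B] [Algebra A B] [Module.FaithfullyFlat A B]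

theorem Module.FaithfullyFlat.dvd_of_algebraMap_dvd {a b : A}
    (h : algebraMap A B b ∣ algebraMap A B a) : b ∣ a := by
  rw [← Ideal.mem_span_singleton,
    ← Ideal.comap_map_eq_self_of_faithfullyFlat (B := B) (Ideal.span {b}), Ideal.mem_comap,
    Ideal.map_span, Set.image_singleton, Ideal.mem_span_singleton]
  exact h

theorem Module.FaithfullyFlat.isDomain [IsDomain B] : IsDomain A :=
  (FaithfulSMul.algebraMap_injective A B).isDomain _

theorem Module.FaithfullyFlat.isIntegrallyClosed [IsDomain B] [IsIntegrallyClosed B] :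
    IsIntegrallyClosed A :=
  .of_dvd_of_map_dvd fun _ _ => dvd_of_algebraMap_dvd (B := B)

end FaithfullyFlat

/-- Let `f : A → B` be a flat local homomorphism of local rings.
If `B` is an integrally closed integral domain, then so is `A`. -/
theorem isIntegrallyClosed_of_flat_localHom
    (A B : Type*) [CommRing A] [CommRing B] [IsLocalRing A] [IsLocalRing B]
    (f : A →+* B) [IsLocalHom f]
    (hflat : letI : Algebra A B := f.toAlgebra; Module.Flat A B)
    [IsDomain B] [IsIntegrallyClosed B] :
    IsDomain A ∧ IsIntegrallyClosed A := by
  let : Algebra A B := f.toAlgebra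
  have : Module.Flat A B := hflat
  have : IsLocalHom (algebraMap A B) := ‹IsLocalHom f›
  have : Module.FaithfullyFlat A B := .of_flat_of_isLocalHom
  exact ⟨Module.FaithfullyFlat.isDomain (B := B),
    Module.FaithfullyFlat.isIntegrallyClosed (B := B)⟩
end

section
/- Let p be a prime, k a field of characteristic p, and let A be the subring of the power series ring k⟦t⟧ consisting of those power series Σ_{n≥0} aₙtⁿ with [k^p(a₀,a₁,…) : k^p] < ∞. Then the p-th power of every element of the Laurent series field k((t)) lies in the fraction field K of A (viewed inside k((t))); consequently k((t)) is a purely inseparable field extension of K. -/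
/-! Write `x = t^v g` with `g ∈ k⟦t⟧`. In characteristic `p` one has `g^p = ∑ aₙ^p t^{pn}`, whose
coefficients lie in `k^p`, so `g^p ∈ A`; and `t ∈ A`. Hence `x^p = t^{pv} g^p ∈ Frac(A)`. -/

set_option synthInstance.maxHeartbeats 1000000
set_option maxHeartbeats 2000000

variable (k : Type*) [Field k] (p : ℕ) [Fact p.Prime] [CharP k p]

/-- The subfield `k^p` of `p`-th powers of the field `k` (of characteristic `p`). -/
noncomputable def pthPowerSubfield : Subfield k := (frobenius k p).fieldRange

variable {k p}

lemma isIntegral_pthPowerSubfield (a : k) : IsIntegral ↥(pthPowerSubfield k p) a := by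
  refine ⟨Polynomial.X ^ p - Polynomial.C ⟨a ^ p, a, rfl⟩,
    Polynomial.monic_X_pow_sub_C _ (Fact.out : p.Prime).ne_zero, ?_⟩
  simp only [Polynomial.eval₂_sub, Polynomial.eval₂_pow, Polynomial.eval₂_X, Polynomial.eval₂_C]
  exact sub_eq_zero.mpr rfl

variable (k p) in
/-- The field `k^p(a₀, a₁, …)` generated over `k^p` by the coefficients of a power
series `f` is a finite extension of `k^p`. -/
def HasFiniteCoeffField (f : PowerSeries k) : Prop :=
  FiniteDimensional ↥(pthPowerSubfield k p)
    ↥(IntermediateField.adjoin ↥(pthPowerSubfield k p)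
      (Set.range fun n => PowerSeries.coeff (R := k) n f))

lemma hasFiniteCoeffField_of_mem {f : PowerSeries k}
    (E : IntermediateField ↥(pthPowerSubfield k p) k) (hE : FiniteDimensional ↥(pthPowerSubfield k p) E)
    (h : ∀ n, PowerSeries.coeff (R := k) n f ∈ E) : HasFiniteCoeffField k p f := by
  have hle : IntermediateField.adjoin ↥(pthPowerSubfield k p)
      (Set.range fun n => PowerSeries.coeff (R := k) n f) ≤ E := by
    rw [IntermediateField.adjoin_le_iff]
    rintro x ⟨n, rfl⟩; exact h n
  exact FiniteDimensional.of_injective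
    (IntermediateField.inclusion hle).toLinearMap
    (IntermediateField.inclusion_injective hle)

variable (k p) in
/-- The subring `A ⊆ k⟦t⟧` of power series whose coefficients generate a finite
extension of `k^p`. -/
noncomputable def finiteCoeffSubring : Subring (PowerSeries k) where
  carrier := {f | HasFiniteCoeffField k p f}
  zero_mem' := hasFiniteCoeffField_of_mem ⊥ inferInstance (fun n => by
    rw [map_zero]; exact zero_mem ⊥)
  one_mem' := hasFiniteCoeffField_of_mem ⊥ inferInstance (fun n => by
    rw [PowerSeries.coeff_one]
    split
    · exact one_mem ⊥
    · exact zero_mem ⊥)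
  add_mem' := by
    intro f g hf hg
    haveI : FiniteDimensional ↥(pthPowerSubfield k p)
        ↥(IntermediateField.adjoin ↥(pthPowerSubfield k p)
          (Set.range fun n => PowerSeries.coeff (R := k) n f)) := hf
    haveI : FiniteDimensional ↥(pthPowerSubfield k p)
        ↥(IntermediateField.adjoin ↥(pthPowerSubfield k p)
          (Set.range fun n => PowerSeries.coeff (R := k) n g)) := hg
    refine hasFiniteCoeffField_of_mem
      (IntermediateField.adjoin _ (Set.range fun n => PowerSeries.coeff (R := k) n f) ⊔
        IntermediateField.adjoin _ (Set.range fun n => PowerSeries.coeff (R := k) n g))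
      inferInstance fun n => ?_
    rw [map_add]
    exact add_mem
      (le_sup_left (α := IntermediateField _ k) (IntermediateField.subset_adjoin _ _ ⟨n, rfl⟩))
      (le_sup_right (α := IntermediateField _ k) (IntermediateField.subset_adjoin _ _ ⟨n, rfl⟩))
  mul_mem' := by
    intro f g hf hg
    haveI : FiniteDimensional ↥(pthPowerSubfield k p)
        ↥(IntermediateField.adjoin ↥(pthPowerSubfield k p)
          (Set.range fun n => PowerSeries.coeff (R := k) n f)) := hf
    haveI : FiniteDimensional ↥(pthPowerSubfield k p)
        ↥(IntermediateField.adjoin ↥(pthPowerSubfield k p)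
          (Set.range fun n => PowerSeries.coeff (R := k) n g)) := hg
    refine hasFiniteCoeffField_of_mem
      (IntermediateField.adjoin _ (Set.range fun n => PowerSeries.coeff (R := k) n f) ⊔
        IntermediateField.adjoin _ (Set.range fun n => PowerSeries.coeff (R := k) n g))
      inferInstance fun n => ?_
    rw [PowerSeries.coeff_mul]
    refine sum_mem fun c _ => mul_mem
      (le_sup_left (α := IntermediateField _ k) (IntermediateField.subset_adjoin _ _ ⟨c.1, rfl⟩))
      (le_sup_right (α := IntermediateField _ k) (IntermediateField.subset_adjoin _ _ ⟨c.2, rfl⟩))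
  neg_mem' := by
    intro f hf
    haveI : FiniteDimensional ↥(pthPowerSubfield k p)
        ↥(IntermediateField.adjoin ↥(pthPowerSubfield k p)
          (Set.range fun n => PowerSeries.coeff (R := k) n f)) := hf
    refine hasFiniteCoeffField_of_mem
      (IntermediateField.adjoin _ (Set.range fun n => PowerSeries.coeff (R := k) n f))
      inferInstance fun n => ?_
    rw [map_neg]
    exact neg_mem (IntermediateField.subset_adjoin _ _ ⟨n, rfl⟩)

namespace PowerSeries

theorem map_frobenius_expand {R : Type*} [CommRing R] (p : ℕ) [ExpChar R p] (hp : p ≠ 0)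
    (f : PowerSeries R) : map (frobenius R p) (expand p hp f) = f ^ p :=
  MvPowerSeries.map_frobenius_expand p hp

theorem coeff_pow_mem_fieldRange_frobenius {F : Type*} [Field F] (p : ℕ) [ExpChar F p]
    (f : PowerSeries F) (n : ℕ) : coeff n (f ^ p) ∈ (frobenius F p).fieldRange := by
  rw [← map_frobenius_expand p (expChar_ne_zero F p), coeff_map]
  exact ⟨_, rfl⟩

end PowerSeries

theorem LaurentSeries.pow_mem_of_powerSeries_pow_mem {F : Type*} [Field F]
    {K : Subfield (LaurentSeries F)} (n : ℕ) (hX : HahnSeries.single (1 : ℤ) (1 : F) ∈ K)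
    (h : ∀ f : PowerSeries F, HahnSeries.ofPowerSeries ℤ F (f ^ n) ∈ K) (x : LaurentSeries F) :
    x ^ n ∈ K := by
  rw [← x.single_order_mul_powerSeriesPart, mul_pow, RatFunc.single_zpow, ← map_pow]
  exact mul_mem (pow_mem (K.zpow_mem hX _) n) (h _)

theorem mem_finiteCoeffSubring_of_coeff_mem {f : PowerSeries k}
    (h : ∀ n, PowerSeries.coeff n f ∈ pthPowerSubfield k p) : f ∈ finiteCoeffSubring k p :=
  hasFiniteCoeffField_of_mem ⊥ inferInstance fun n =>
    IntermediateField.mem_bot.mpr ⟨⟨_, h n⟩, rfl⟩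

theorem X_mem_finiteCoeffSubring : PowerSeries.X ∈ finiteCoeffSubring k p :=
  mem_finiteCoeffSubring_of_coeff_mem fun n => by
    rw [PowerSeries.coeff_X]
    split_ifs
    exacts [one_mem _, zero_mem _]

theorem pow_mem_finiteCoeffSubring (f : PowerSeries k) : f ^ p ∈ finiteCoeffSubring k p :=
  mem_finiteCoeffSubring_of_coeff_mem (PowerSeries.coeff_pow_mem_fieldRange_frobenius p f)

/-- Every element of `k((t))` has its `p`-th power in the fraction
field of `A` (the subfield of `k((t))` generated by `A`), where `A ⊆ k⟦t⟧` is the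
subring of power series whose coefficients generate a finite extension of `k^p`.
Consequently `k((t))` is purely inseparable over `Frac(A)`. -/
theorem pow_p_mem_fractionField_finiteCoeffSubring (x : LaurentSeries k) :
    x ^ p ∈ Subfield.closure
      ((HahnSeries.ofPowerSeries ℤ k) '' (finiteCoeffSubring k p : Set (PowerSeries k))) := by
  refine LaurentSeries.pow_mem_of_powerSeries_pow_mem p ?_ (fun f => ?_) x
  · rw [← HahnSeries.ofPowerSeries_X]
    exact Subfield.subset_closure ⟨_, X_mem_finiteCoeffSubring, rfl⟩
  · exact Subfield.subset_closure ⟨_, pow_mem_finiteCoeffSubring f, rfl⟩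
end
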